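/- Let ρ be a congruence on a completely regular semigroup S such that ker ρ ⊆ ker μ, where μ is the greatest idempotent-separating congruence on S. Then ρ ∩ H = ρ ∩ μ, where H is Green's relation. -/
import Mathlib


/-- A completely regular semigroup: a semigroup with a unary inversion such that
every element lies in a subgroup; `a⁻¹` is the group inverse of `a` in its maximal
subgroup and `a * a⁻¹` is the identity of that subgroup. -/
class CompletelyRegularSemigroup (S : Type*) extends Semigroup S, Inv S where
  mul_inv_mul (a : S) : a * a⁻¹ * a = a
  inv_mul_inv (a : S) : a⁻¹ * a * a⁻¹ = a⁻¹
  mul_inv_comm (a : S) : a * a⁻¹ = a⁻¹ * a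

variable {S : Type*} [CompletelyRegularSemigroup S]

/-- Green's relation `H` on a completely regular semigroup: `a H b` iff
`a` and `b` lie in the same maximal subgroup, i.e. `a⁰ = b⁰`. -/
def hRel (a b : S) : Prop := a * a⁻¹ = b * b⁻¹

/-- The relation `Θ`: `a Θ b` iff `a⁰ * b = a * b⁰`. -/
def thetaRel (a b : S) : Prop := (a * a⁻¹) * b = a * (b * b⁻¹)

/-- The relation `F`: `a F b` iff `a * b⁻¹` is idempotent. -/
def fRel (a b : S) : Prop := IsIdempotentElem (a * b⁻¹)

/-- The kernel of a congruence: the union of the congruence classes of idempotents. -/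
def conKer (c : Con S) : Set S := {a | ∃ e : S, IsIdempotentElem e ∧ c a e}

/-- In any semigroup, a commuting inverse is unique. -/
lemma comm_inv_unique {M : Type*} [Semigroup M] {a y z : M}
    (hy1 : a * y * a = a) (hy2 : y * a * y = y) (hy3 : a * y = y * a)
    (hz1 : a * z * a = a) (hz2 : z * a * z = z) (hz3 : a * z = z * a) : y = z := by
  have hef : a * y = a * z := by
    have h1 : a * y = (a * y) * (a * z) := by
      calc a * y = y * a := hy3
        _ = y * (a * z * a) := by rw [hz1]
        _ = (y * a) * (z * a) := by simp only [mul_assoc]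
        _ = (a * y) * (a * z) := by rw [← hy3, ← hz3]
    have h2 : a * z = (a * y) * (a * z) := by
      conv_lhs => rw [← hy1]
      simp only [mul_assoc]
    rw [h1, ← h2]
  calc y = y * a * y := hy2.symm
    _ = y * (a * y) := by rw [mul_assoc]
    _ = y * (a * z) := by rw [hef]
    _ = (y * a) * z := by rw [mul_assoc]
    _ = (a * y) * z := by rw [hy3]
    _ = (a * z) * z := by rw [hef]
    _ = (z * a) * z := by rw [hz3]
    _ = z := hz2

open CompletelyRegularSemigroup

/-- Any congruence on a completely regular semigroup respects the inversion. -/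
lemma con_inv (c : Con S) {a b : S} (h : c a b) : c a⁻¹ b⁻¹ := by
  rw [← c.eq] at h ⊢
  refine comm_inv_unique (a := (b : c.Quotient)) ?_ ?_ ?_ ?_ ?_ ?_
  · rw [← h]; exact_mod_cast congrArg (Con.toQuotient) (mul_inv_mul a)
  · rw [← h]; exact_mod_cast congrArg (Con.toQuotient) (inv_mul_inv a)
  · rw [← h]; exact_mod_cast congrArg (Con.toQuotient) (mul_inv_comm a)
  · exact_mod_cast congrArg (Con.toQuotient) (mul_inv_mul b)
  · exact_mod_cast congrArg (Con.toQuotient) (inv_mul_inv b)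
  · exact_mod_cast congrArg (Con.toQuotient) (mul_inv_comm b)

lemma idem_inv {e : S} (he : IsIdempotentElem e) : e⁻¹ = e := by
  refine comm_inv_unique (a := e) (mul_inv_mul e) (inv_mul_inv e) (mul_inv_comm e) ?_ ?_ rfl
  · rw [he, he]
  · rw [he, he]

lemma mul_inv_idem (a : S) : IsIdempotentElem (a * a⁻¹) := by
  show a * a⁻¹ * (a * a⁻¹) = a * a⁻¹
  calc a * a⁻¹ * (a * a⁻¹) = a * (a⁻¹ * a * a⁻¹) := by simp only [mul_assoc]
    _ = a * a⁻¹ := by rw [inv_mul_inv]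

/-- If `ker ρ ⊆ ker μ`, where `μ` is the greatest idempotent-separating congruence,
then `ρ ∩ H = ρ ∩ μ`. -/
theorem inter_hRel_eq_inter_mu (μ ρ : Con S)
    (hsep : ∀ e f : S, IsIdempotentElem e → IsIdempotentElem f → μ e f → e = f)
    (hgreatest : ∀ θ : Con S,
      (∀ e f : S, IsIdempotentElem e → IsIdempotentElem f → θ e f → e = f) → θ ≤ μ)
    (hker : conKer ρ ⊆ conKer μ) :
    ∀ a b : S, (ρ a b ∧ hRel a b) ↔ (ρ a b ∧ μ a b) := by
  intro a b
  constructor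
  · rintro ⟨hρ, hH⟩
    refine ⟨hρ, ?_⟩
    set e := a * a⁻¹ with he_def
    have heb : b * b⁻¹ = e := hH.symm
    have he : IsIdempotentElem e := mul_inv_idem a
    have hea : a * e = a := by rw [he_def, mul_inv_comm, ← mul_assoc, mul_inv_mul]
    have heb' : b * e = b := by rw [← heb, mul_inv_comm, ← mul_assoc, mul_inv_mul]
    have heB : e * b = b := by rw [← heb]; exact mul_inv_mul b
    have hbinvb : b⁻¹ * b = e := by rw [← mul_inv_comm, heb]
    have hainva : a⁻¹ * a = e := by rw [← mul_inv_comm]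
    -- x = a * b⁻¹ lies in the group with identity e, with inverse b * a⁻¹
    set x := a * b⁻¹ with hx_def
    have hxinv : x⁻¹ = b * a⁻¹ := by
      refine comm_inv_unique (a := x) (mul_inv_mul x) (inv_mul_inv x) (mul_inv_comm x) ?_ ?_ ?_
      · calc x * (b * a⁻¹) * x = a * (b⁻¹ * b) * (a⁻¹ * a) * b⁻¹ := by
              simp only [hx_def, mul_assoc]
          _ = a * e * e * b⁻¹ := by rw [hbinvb, hainva]
          _ = a * b⁻¹ := by rw [hea, hea]
          _ = x := rfl
      · calc b * a⁻¹ * x * (b * a⁻¹) = b * (a⁻¹ * a) * (b⁻¹ * b) * a⁻¹ := by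
              simp only [hx_def, mul_assoc]
          _ = b * e * e * a⁻¹ := by rw [hbinvb, hainva]
          _ = b * a⁻¹ := by rw [heb', heb']
      · have l1 : x * (b * a⁻¹) = e := by
          calc x * (b * a⁻¹) = a * (b⁻¹ * b) * a⁻¹ := by simp only [hx_def, mul_assoc]
            _ = a * e * a⁻¹ := by rw [hbinvb]
            _ = a * a⁻¹ := by rw [hea]
            _ = e := he_def.symm
        have l2 : (b * a⁻¹) * x = e := by
          calc (b * a⁻¹) * x = b * (a⁻¹ * a) * b⁻¹ := by simp only [hx_def, mul_assoc]
            _ = b * e * b⁻¹ := by rw [hainva]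
            _ = b * b⁻¹ := by rw [heb']
            _ = e := heb
        rw [l1, l2]
    have hxx : x * x⁻¹ = e := by
      rw [hxinv]
      calc a * b⁻¹ * (b * a⁻¹) = a * (b⁻¹ * b) * a⁻¹ := by simp only [mul_assoc]
        _ = a * e * a⁻¹ := by rw [hbinvb]
        _ = e := by rw [hea]
    -- x ∈ ker ρ
    have hxρ : ρ x e := by
      have := ρ.mul hρ (ρ.refl b⁻¹)
      rwa [heb] at this
    obtain ⟨f, hf, hxf⟩ := hker ⟨e, he, hxρ⟩
    have hxinvf : μ x⁻¹ f := by
      have := con_inv μ hxf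
      rwa [idem_inv hf] at this
    have hef : μ e f := by
      have := μ.mul hxf hxinvf
      rwa [hxx, hf] at this
    have : e = f := hsep e f he hf hef
    have hxe : μ x e := this ▸ hxf
    have := μ.mul hxe (μ.refl b)
    have hxb : x * b = a := by
      rw [hx_def, mul_assoc, hbinvb, hea]
    rwa [hxb, heB] at this
  · rintro ⟨hρ, hμ⟩
    refine ⟨hρ, ?_⟩
    have h1 : μ (a * a⁻¹) (b * b⁻¹) := μ.mul hμ (con_inv μ hμ)
    exact hsep _ _ (mul_inv_idem a) (mul_inv_idem b) h1
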